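/- Under Assumption (0 < τ < 2/‖A*A‖), suppose x^k ⇀ x* weakly where x* is a fixed point of S_τ = J_τ ∘ G_τ, and let j ∈ supp(x*) (so x*_j ≠ 0). Then ‖G_τ(x*)_j‖₂ > τ, and there are only finitely many k with ‖G_τ(x^k)_j‖₂ ≤ τ. -/

import Mathlib

/-!
A row of the iterate that passes through the thresholding with `‖G_τ(x^k)_j‖ ≤ τ` is set to zero,
so `x^{k+1}_j = 0`. Pairing with the vector supported on row `j` with value `x*_j` shows that
`⟪x^k_j, x*_j⟫ → ‖x*_j‖² > 0`, hence `x^k_j ≠ 0` for all large `k`. The same thresholding argument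
applied to the fixed-point equation gives `τ < ‖G_τ(x*)_j‖`.
-/

open Filter
open scoped RealInnerProductSpace

variable {H0 K : Type*} [NormedAddCommGroup H0] [InnerProductSpace ℝ H0] [CompleteSpace H0]
  [NormedAddCommGroup K] [InnerProductSpace ℝ K] [CompleteSpace K]

instance {N : ℕ} : CompleteSpace (PiLp 2 (fun _ : Fin N => H0)) :=
  inferInstance

noncomputable def softThreshold {E : Type*} [NormedAddCommGroup E] [NormedSpace ℝ E]
    (τ : ℝ) (z : E) : E :=
  (max (‖z‖ - τ) 0 / ‖z‖) • z

theorem softThreshold_eq_zero_of_norm_le {E : Type*} [NormedAddCommGroup E] [NormedSpace ℝ E]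
    {τ : ℝ} {z : E} (h : ‖z‖ ≤ τ) : softThreshold τ z = 0 := by
  rw [softThreshold, max_eq_right (sub_nonpos.mpr h), zero_div, zero_smul]

theorem PiLp.inner_single_right {ι : Type*} [Fintype ι] [DecidableEq ι] {E : ι → Type*}
    [∀ i, NormedAddCommGroup (E i)] [∀ i, InnerProductSpace ℝ (E i)]
    (z : PiLp 2 E) (i : ι) (v : E i) : ⟪z, PiLp.single 2 i v⟫ = ⟪z i, v⟫ := by
  rw [PiLp.inner_apply, Finset.sum_eq_single i]
  · rw [PiLp.single_eq_same]
  · intro b _ hb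
    rw [PiLp.single_eq_of_ne 2 hb, inner_zero_right]
  · exact fun hi => absurd (Finset.mem_univ i) hi

theorem tendsto_inner_apply_of_tendsto_inner {ι : Type*} [Fintype ι] {E : ι → Type*}
    [∀ i, NormedAddCommGroup (E i)] [∀ i, InnerProductSpace ℝ (E i)] {α : Type*} {l : Filter α}
    {x : α → PiLp 2 E} {a : PiLp 2 E}
    (hweak : ∀ y : PiLp 2 E, Tendsto (fun k => ⟪x k, y⟫) l (nhds ⟪a, y⟫)) (i : ι) (v : E i) :
    Tendsto (fun k => ⟪x k i, v⟫) l (nhds ⟪a i, v⟫) := by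
  classical
  simpa only [PiLp.inner_single_right] using hweak (PiLp.single 2 i v)

theorem finite_setOf_eq_zero_of_tendsto_inner_self {E : Type*} [NormedAddCommGroup E]
    [InnerProductSpace ℝ E] {x : ℕ → E} {a : E}
    (h : Tendsto (fun k => ⟪x k, a⟫) atTop (nhds ⟪a, a⟫)) (ha : a ≠ 0) :
    {k | x k = 0}.Finite := by
  have hpos : (0 : ℝ) < ⟪a, a⟫ := real_inner_self_pos.mpr ha
  have hev : ∀ᶠ k in atTop, x k ≠ 0 :=
    (h.eventually (eventually_gt_nhds hpos)).mono fun k hk hk0 => by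
      rw [hk0, inner_zero_left] at hk
      exact lt_irrefl 0 hk
  rw [← Nat.cofinite_eq_atTop, eventually_cofinite] at hev
  simpa only [not_not] using hev

theorem stmt_14_general {N : ℕ}
    (τ : ℝ)
    (G : PiLp 2 (fun _ : Fin N => H0) → PiLp 2 (fun _ : Fin N => H0))
    (xs : PiLp 2 (fun _ : Fin N => H0))
    (hfix : ∀ j : Fin N, xs j = (max (‖G xs j‖ - τ) 0 / ‖G xs j‖) • G xs j)
    (x : ℕ → PiLp 2 (fun _ : Fin N => H0))
    (hiter : ∀ (k : ℕ) (j : Fin N),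
      x (k + 1) j = (max (‖G (x k) j‖ - τ) 0 / ‖G (x k) j‖) • G (x k) j)
    (hweak : ∀ y : PiLp 2 (fun _ : Fin N => H0),
      Tendsto (fun k => ⟪x k, y⟫) atTop (nhds ⟪xs, y⟫))
    (j : Fin N) (hj : xs j ≠ 0) :
    τ < ‖G xs j‖ ∧ {k : ℕ | ‖G (x k) j‖ ≤ τ}.Finite := by
  refine ⟨lt_of_not_ge fun hle => hj ?_, ?_⟩
  · rw [hfix j]
    exact softThreshold_eq_zero_of_norm_le hle
  · have hzero : {m | x m j = 0}.Finite :=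
      finite_setOf_eq_zero_of_tendsto_inner_self
        (tendsto_inner_apply_of_tendsto_inner hweak j (xs j)) hj
    refine (hzero.preimage (add_left_injective 1).injOn).subset fun k hk => ?_
    change x (k + 1) j = 0
    rw [hiter k j]
    exact softThreshold_eq_zero_of_norm_le hk

/-- If `x^k ⇀ x*` with `x*` a fixed point of `J_τ ∘ G_τ` and `j ∈ supp(x*)`, then
`‖G_τ(x*)_j‖ > τ` and `‖G_τ(x^k)_j‖ ≤ τ` for only finitely many `k`. -/
theorem stmt_14 {N : ℕ} (A : PiLp 2 (fun _ : Fin N => H0) →L[ℝ] K) (u : K)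
    (τ : ℝ) (hτ0 : 0 < τ) (hτ2 : τ * ‖(ContinuousLinearMap.adjoint A).comp A‖ < 2)
    (G : PiLp 2 (fun _ : Fin N => H0) → PiLp 2 (fun _ : Fin N => H0))
    (hG : ∀ y, G y = y - τ • (ContinuousLinearMap.adjoint A) (A y - u))
    (xs : PiLp 2 (fun _ : Fin N => H0))
    (hfix : ∀ j : Fin N, xs j = (max (‖G xs j‖ - τ) 0 / ‖G xs j‖) • G xs j)
    (x : ℕ → PiLp 2 (fun _ : Fin N => H0))
    (hiter : ∀ (k : ℕ) (j : Fin N),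
      x (k + 1) j = (max (‖G (x k) j‖ - τ) 0 / ‖G (x k) j‖) • G (x k) j)
    (hweak : ∀ y : PiLp 2 (fun _ : Fin N => H0),
      Tendsto (fun k => ⟪x k, y⟫) atTop (nhds ⟪xs, y⟫))
    (j : Fin N) (hj : xs j ≠ 0) :
    τ < ‖G xs j‖ ∧ {k : ℕ | ‖G (x k) j‖ ≤ τ}.Finite :=
  stmt_14_general τ G xs hfix x hiter hweak j hj
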